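/- arXiv:2201.00186 — 2 statements merged into one kernel-verified Lean document; each statement's English description precedes it below -/
import Mathlib

section
/- Let D be a strongly connected digraph of order n = 2r+1 with radius r >= 5/2 (so n >= 6). Then the number of arcs of D satisfies |A(D)| <= (2r+1)(r+1) - 1. -/
variable {V : Type*}

/-- `ReachWithin A k u v` means the directed distance from `u` to `v` is at most `k`. -/
def ReachWithin (A : V → V → Prop) : ℕ → V → V → Prop
  | 0, u, v => u = v
  | k+1, u, v => u = v ∨ ∃ w, A u w ∧ ReachWithin A k w v

/-- out-eccentricity of `v` is at most `r`. -/
def outEccLe (A : V → V → Prop) (r : ℕ) (v : V) : Prop :=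
  ∀ u, ReachWithin A r v u

/-- in-eccentricity of `v` is at most `r`. -/
def inEccLe (A : V → V → Prop) (r : ℕ) (v : V) : Prop :=
  ∀ u, ReachWithin A r u v

/-- The out-radius of the digraph `A` equals `r`. -/
def outRadiusIs (A : V → V → Prop) (r : ℕ) : Prop :=
  (∃ v, outEccLe A r v) ∧ ∀ v, ¬ outEccLe A (r - 1) v

/-- A digraph is strongly connected (biconnected) if every vertex reaches every other. -/
def StronglyConnected (A : V → V → Prop) : Prop :=
  ∀ u v, ∃ k, ReachWithin A k u v

/-- Number of arcs of the digraph. -/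
noncomputable def arcCard (A : V → V → Prop) : ℕ :=
  {p : V × V | A p.1 p.2}.ncard

noncomputable def outDeg (A : V → V → Prop) (v : V) : ℕ :=
  {w | A v w}.ncard

noncomputable def inDeg (A : V → V → Prop) (v : V) : ℕ :=
  {w | A w v}.ncard

noncomputable def totalDeg (A : V → V → Prop) (v : V) : ℕ :=
  outDeg A v + inDeg A v

/-- The directed distance from `u` to `v` equals `k`. -/
def DistEq (A : V → V → Prop) (k : ℕ) (u v : V) : Prop :=
  ReachWithin A k u v ∧ ∀ j < k, ¬ ReachWithin A j u v

/-- out-eccentricity as a natural number. -/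
noncomputable def outEcc (A : V → V → Prop) (v : V) : ℕ :=
  sInf {k | outEccLe A k v}

/-- in-eccentricity as a natural number. -/
noncomputable def inEcc (A : V → V → Prop) (v : V) : ℕ :=
  sInf {k | inEccLe A k v}

/-- `P` is a bipartition of the digraph `A`: every arc joins the two classes. -/
def Bipartition (A : V → V → Prop) (P : V → Prop) : Prop :=
  ∀ u v, A u v → (P u ↔ ¬ P v)

/-!
Count the vertices by their distance from `v`: distance `0` gives `v`, distance `1` gives the
out-neighbours, and every distance `2, …, e⁺(v)` occurs, so `d⁺(v) + e⁺(v) ≤ n`; dually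
`d⁻(v) + e⁻(v) ≤ n`. Since `e⁺(v) + e⁻(v) ≥ R = n - 1`, every vertex has total degree at most
`R + 2`, i.e. `2|A| ≤ (R+1)(R+2)`. Both sides are even, so a counterexample has equality, and then
all these bounds are tight. Some vertex `x` then has, say, `e⁺(x) = s ≥ 3`, and each distance
`2, …, s` from `x` is attained by exactly one vertex. The vertex `z` at distance `s` can only be
entered from the vertex at distance `s - 1`, so `d⁻(z) ≤ 1`, `e⁻(z) ≥ R` and `e⁺(z) = 0`, which is
absurd.
-/

open Finset

variable {A : V → V → Prop}

namespace ReachWithin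

lemma refl (A : V → V → Prop) : ∀ k (v : V), ReachWithin A k v v
  | 0, _ => rfl
  | _ + 1, _ => Or.inl rfl

lemma mono : ∀ {j k : ℕ} {u v : V}, ReachWithin A j u v → j ≤ k → ReachWithin A k u v
  | 0, k, u, _, rfl, _ => refl A k u
  | _ + 1, 0, _, _, _, h => absurd h (by omega)
  | _ + 1, _ + 1, _, _, Or.inl h, _ => Or.inl h
  | _ + 1, _ + 1, _, _, Or.inr ⟨w, huw, h⟩, hjk => Or.inr ⟨w, huw, mono h (by omega)⟩

end ReachWithin

lemma reachWithin_succ_iff_snoc {k : ℕ} {u v : V} :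
    ReachWithin A (k + 1) u v ↔ u = v ∨ ∃ w, ReachWithin A k u w ∧ A w v := by
  induction k generalizing u with
  | zero =>
    simp only [ReachWithin, exists_eq_right, exists_eq_left']
  | succ m ih =>
    constructor
    · rintro (rfl | ⟨x, hux, hxv⟩)
      · exact Or.inl rfl
      · rcases ih.mp hxv with rfl | ⟨w, hxw, hwv⟩
        · exact Or.inr ⟨u, ReachWithin.refl A _ u, hux⟩
        · exact Or.inr ⟨w, Or.inr ⟨x, hux, hxw⟩, hwv⟩
    · rintro (rfl | ⟨w, rfl | ⟨x, hux, hxw⟩, hwv⟩)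
      · exact Or.inl rfl
      · exact Or.inr ⟨v, hwv, ReachWithin.refl A _ v⟩
      · exact Or.inr ⟨x, hux, ih.mpr (Or.inr ⟨w, hxw, hwv⟩)⟩

lemma reachWithin_flip {k : ℕ} {u v : V} : ReachWithin (flip A) k u v ↔ ReachWithin A k v u := by
  induction k generalizing v with
  | zero => exact eq_comm
  | succ m ih =>
    rw [reachWithin_succ_iff_snoc, ReachWithin]
    simp only [ih, flip, eq_comm, and_comm]

lemma StronglyConnected.flip (hSC : StronglyConnected A) : StronglyConnected (flip A) :=
  fun u v => (hSC v u).imp fun _ => reachWithin_flip.mpr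

lemma outEcc_flip (A : V → V → Prop) (v : V) : outEcc (flip A) v = inEcc A v := by
  simp only [outEcc, inEcc, outEccLe, inEccLe, reachWithin_flip]

lemma inEcc_flip (A : V → V → Prop) (v : V) : inEcc (flip A) v = outEcc A v :=
  (outEcc_flip (flip A) v).symm

/-- The directed distance; the junk value `sInf ∅ = 0` when `v` is unreachable from `u`. -/
noncomputable def dirDist (A : V → V → Prop) (u v : V) : ℕ := sInf {k | ReachWithin A k u v}

lemma dirDist_le {k : ℕ} {u v : V} (h : ReachWithin A k u v) : dirDist A u v ≤ k :=
  Nat.sInf_le h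

section StronglyConnected

variable (hSC : StronglyConnected A)
include hSC

lemma reachWithin_dirDist (u v : V) : ReachWithin A (dirDist A u v) u v :=
  Nat.sInf_mem (hSC u v)

lemma dirDist_le_iff {k : ℕ} {u v : V} : dirDist A u v ≤ k ↔ ReachWithin A k u v :=
  ⟨(reachWithin_dirDist hSC u v).mono, dirDist_le⟩

lemma dirDist_lt_two_iff {u v : V} : dirDist A u v < 2 ↔ v = u ∨ A u v := by
  rw [Nat.lt_succ_iff, dirDist_le_iff hSC]
  simp [ReachWithin, eq_comm]

lemma dirDist_le_succ_of_adj {v w z : V} (h : A w z) : dirDist A v z ≤ dirDist A v w + 1 :=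
  dirDist_le (reachWithin_succ_iff_snoc.mpr (Or.inr ⟨w, reachWithin_dirDist hSC v w, h⟩))

lemma exists_dirDist_eq_of_le {v u : V} {j : ℕ} (hj : j ≤ dirDist A v u) :
    ∃ w, dirDist A v w = j := by
  induction hd : dirDist A v u generalizing u with
  | zero => exact ⟨u, by omega⟩
  | succ m ih =>
    rcases (hd ▸ hj).eq_or_lt with rfl | hlt
    · exact ⟨u, hd⟩
    have hr := reachWithin_dirDist hSC v u
    rw [hd, reachWithin_succ_iff_snoc] at hr
    rcases hr with rfl | ⟨w, hvw, hwu⟩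
    · have := dirDist_le (ReachWithin.refl A 0 v)
      omega
    have hw : dirDist A v w = m := by
      have := dirDist_le hvw
      have := dirDist_le_succ_of_adj hSC (v := v) hwu
      omega
    exact ih (hw ▸ Nat.lt_succ_iff.mp hlt) hw

lemma outEccLe_iff {k : ℕ} {v : V} : outEccLe A k v ↔ ∀ u, dirDist A v u ≤ k :=
  forall_congr' fun _ => (dirDist_le_iff hSC).symm

variable [Fintype V]

lemma outEcc_eq_sup (v : V) : outEcc A v = univ.sup (dirDist A v) := by
  have : {k | outEccLe A k v} = Set.Ici (univ.sup (dirDist A v)) := by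
    ext k
    simp [outEccLe_iff hSC]
  rw [outEcc, this, csInf_Ici]

lemma dirDist_le_outEcc (v u : V) : dirDist A v u ≤ outEcc A v :=
  outEcc_eq_sup hSC v ▸ le_sup (mem_univ u)

lemma exists_dirDist_eq_of_le_outEcc {v : V} {j : ℕ} (hj : j ≤ outEcc A v) :
    ∃ w, dirDist A v w = j := by
  obtain ⟨u, -, hu⟩ := exists_mem_eq_sup univ ⟨v, mem_univ v⟩ (dirDist A v)
  exact exists_dirDist_eq_of_le hSC (hu ▸ outEcc_eq_sup hSC v ▸ hj)

variable (hirr : Irreflexive A)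
include hirr

lemma card_eq_outDeg_add_card_two_le_dirDist (v : V) :
    Fintype.card V = outDeg A v + 1 + #{w | 2 ≤ dirDist A v w} := by
  classical
  have hnear : univ.filter (fun w => dirDist A v w < 2) = insert v (univ.filter (A v)) := by
    ext w
    simp [dirDist_lt_two_iff hSC]
  have hout : outDeg A v = #{w | A v w} := by
    rw [outDeg, Set.ncard_eq_toFinset_card', Set.toFinset_ofPred]
  rw [← card_univ, ← card_filter_add_card_filter_not (fun w => dirDist A v w < 2), hnear,
    card_insert_of_notMem (by simpa using hirr v), ← hout]
  simp only [not_lt]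

omit hirr in
lemma image_dirDist_of_two_le (v : V) :
    image (dirDist A v) {w | 2 ≤ dirDist A v w} = Icc 2 (outEcc A v) := by
  ext j
  simp only [mem_image, mem_filter, mem_univ, true_and, mem_Icc]
  constructor
  · rintro ⟨w, hw, rfl⟩
    exact ⟨hw, dirDist_le_outEcc hSC v w⟩
  · rintro ⟨h2, hj⟩
    obtain ⟨w, rfl⟩ := exists_dirDist_eq_of_le_outEcc hSC hj
    exact ⟨w, h2, rfl⟩

lemma outDeg_add_outEcc_le (v : V) : outDeg A v + outEcc A v ≤ Fintype.card V := by
  have := card_image_le (s := {w | 2 ≤ dirDist A v w}) (f := dirDist A v)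
  rw [image_dirDist_of_two_le hSC, Nat.card_Icc] at this
  have := card_eq_outDeg_add_card_two_le_dirDist hSC hirr v
  omega

lemma outDeg_lt_card (v : V) : outDeg A v < Fintype.card V := by
  have := card_eq_outDeg_add_card_two_le_dirDist hSC hirr v
  omega

lemma injOn_dirDist_of_outDeg_add_outEcc_eq {v : V}
    (h : outDeg A v + outEcc A v = Fintype.card V) :
    Set.InjOn (dirDist A v) {w | 2 ≤ dirDist A v w} := by
  have hcard := card_eq_outDeg_add_card_two_le_dirDist hSC hirr v
  have himage := image_dirDist_of_two_le hSC v
  rw [← coe_filter_univ, ← card_image_iff, himage, Nat.card_Icc]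
  omega

lemma exists_inDeg_le_one {x : V} (htight : outDeg A x + outEcc A x = Fintype.card V)
    (hx : 3 ≤ outEcc A x) : ∃ z, inDeg A z ≤ 1 := by
  have hinj := injOn_dirDist_of_outDeg_add_outEcc_eq hSC hirr htight
  obtain ⟨z, hz⟩ := exists_dirDist_eq_of_le_outEcc hSC (le_refl (outEcc A x))
  obtain ⟨u, hu⟩ := exists_dirDist_eq_of_le_outEcc hSC (Nat.sub_le (outEcc A x) 1)
  refine ⟨z, ?_⟩
  have hpred : {w | A w z} ⊆ {u} := by
    intro w hwz
    have h1 := dirDist_le_succ_of_adj hSC (v := x) hwz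
    have h2 := dirDist_le_outEcc hSC x w
    have hne : dirDist A x w ≠ dirDist A x z := fun h =>
      hirr z (hinj (show 2 ≤ dirDist A x w by omega) (show 2 ≤ dirDist A x z by omega) h ▸ hwz)
    exact hinj (show 2 ≤ dirDist A x w by omega) (show 2 ≤ dirDist A x u by omega) (by omega)
  exact (Set.ncard_le_ncard hpred).trans (Set.ncard_singleton u).le

end StronglyConnected

section Flip

variable [Fintype V] (hSC : StronglyConnected A) (hirr : Irreflexive A)
include hSC hirr

lemma inDeg_add_inEcc_le (v : V) : inDeg A v + inEcc A v ≤ Fintype.card V := by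
  have := outDeg_add_outEcc_le (A := flip A) hSC.flip (fun w => hirr w) v
  rw [outEcc_flip] at this
  exact this

lemma inDeg_lt_card (v : V) : inDeg A v < Fintype.card V :=
  outDeg_lt_card (A := flip A) hSC.flip (fun w => hirr w) v

lemma exists_outDeg_le_one {x : V} (htight : inDeg A x + inEcc A x = Fintype.card V)
    (hx : 3 ≤ inEcc A x) : ∃ z, outDeg A z ≤ 1 :=
  exists_inDeg_le_one (A := flip A) hSC.flip (fun w => hirr w) (by rwa [outEcc_flip])
    (by rwa [outEcc_flip])

end Flip

lemma ncard_setOf_eq_sum_ite {α : Type*} [Fintype α] (p : α → Prop) [DecidablePred p] :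
    {a | p a}.ncard = ∑ a, if p a then 1 else 0 := by
  rw [Set.ncard_eq_toFinset_card', Set.toFinset_ofPred, card_filter]

lemma two_mul_arcCard [Fintype V] (A : V → V → Prop) : 2 * arcCard A = ∑ v, totalDeg A v := by
  classical
  simp only [totalDeg, outDeg, inDeg, arcCard, sum_add_distrib, ncard_setOf_eq_sum_ite]
  rw [Fintype.sum_prod_type, sum_comm (f := fun v w => if A w v then 1 else 0), two_mul]

/-- `R = 2r` is twice the, possibly half-integral, radius, so the bound `|A| ≤ (2r+1)(r+1) - 1`
reads `2|A| ≤ (R+1)(R+2) - 2`. -/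
theorem stmt5_general [Fintype V] (A : V → V → Prop) (hirr : Irreflexive A)
    (hSC : StronglyConnected A) (R : ℕ) (hR : 5 ≤ R)
    (hn : Fintype.card V = R + 1)
    (hradLB : ∀ x : V, R ≤ outEcc A x + inEcc A x) :
    2 * arcCard A ≤ (R + 1) * (R + 2) - 2 := by
  have hout := outDeg_add_outEcc_le hSC hirr
  have hin := inDeg_add_inEcc_le hSC hirr
  have hdeg (v : V) : totalDeg A v ≤ R + 2 := by
    have := hout v; have := hin v; have := hradLB v
    unfold totalDeg; omega
  have hsum : ∑ v, totalDeg A v ≤ ∑ _v : V, (R + 2) := sum_le_sum fun v _ => hdeg v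
  rw [sum_const, card_univ, hn, smul_eq_mul, ← two_mul_arcCard] at hsum
  by_contra hlt
  have hregular (v : V) : totalDeg A v = R + 2 := by
    refine (sum_eq_sum_iff_of_le fun v _ => hdeg v).mp ?_ v (mem_univ v)
    obtain ⟨m, hm⟩ : Even ((R + 1) * (R + 2)) := Nat.even_mul_succ_self (R + 1)
    rw [← two_mul_arcCard, sum_const, card_univ, hn, smul_eq_mul]
    omega
  have htight (v : V) : outDeg A v + outEcc A v = R + 1 ∧ inDeg A v + inEcc A v = R + 1 ∧
      outEcc A v + inEcc A v = R := by
    have := hout v; have := hin v; have := hradLB v; have := hregular v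
    unfold totalDeg at *; omega
  obtain ⟨x⟩ : Nonempty V := Fintype.card_pos_iff.mp (by omega)
  rcases le_or_gt 3 (outEcc A x) with hx | hx
  · obtain ⟨z, hz⟩ := exists_inDeg_le_one hSC hirr (hn ▸ (htight x).1) hx
    have := htight z; have := outDeg_lt_card hSC hirr z
    omega
  · have hx' : 3 ≤ inEcc A x := by have := htight x; omega
    obtain ⟨z, hz⟩ := exists_outDeg_le_one hSC hirr (hn ▸ (htight x).2.1) hx'
    have := htight z; have := inDeg_lt_card hSC hirr z
    omega

/-- A strongly connected digraph of order `n = 2r+1` with radius `r ≥ 5/2` has at most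
`(2r+1)(r+1) - 1` arcs. Here `R = 2r` (twice the, possibly half-integral, radius), so the
bound reads `2|A| ≤ (R+1)(R+2) - 2`. -/
theorem stmt5 [Fintype V] (A : V → V → Prop) (hirr : Irreflexive A)
    (hSC : StronglyConnected A) (R : ℕ) (hR : 5 ≤ R)
    (hn : Fintype.card V = R + 1)
    (hradLB : ∀ x : V, R ≤ outEcc A x + inEcc A x)
    (hradEq : ∃ x : V, outEcc A x + inEcc A x = R) :
    2 * arcCard A ≤ (R + 1) * (R + 2) - 2 :=
  stmt5_general A hirr hSC R hR hn hradLB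
end

section
/- Let D = (V_1 ∪ V_2, A) be a strongly connected bipartite digraph of order n with out-radius r, where r >= 4 is even. Then for any vertex v in V_1, the total degree satisfies deg(v) <= 2|V_2| - (r-2). -/
variable {V : Type*}

section Aux
variable {A : V → V → Prop}

lemma rw_refl' : ∀ (k : ℕ) (u : V), ReachWithin A k u u
  | 0, _ => rfl
  | _+1, _ => Or.inl rfl

lemma rw_succ' {k : ℕ} {u w : V} (h : ReachWithin A k u w) : ReachWithin A (k+1) u w := by
  induction k generalizing u with
  | zero => exact Or.inl h
  | succ k ih =>
    rcases h with h | ⟨x, hax, hx⟩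
    · exact Or.inl h
    · exact Or.inr ⟨x, hax, ih hx⟩

lemma rw_mono' {k k' : ℕ} {u w : V} (h : ReachWithin A k u w) (hk : k ≤ k') :
    ReachWithin A k' u w := by
  obtain ⟨m, rfl⟩ := Nat.exists_eq_add_of_le hk
  clear hk
  induction m with
  | zero => exact h
  | succ m ih => exact rw_succ' ih

lemma rw_prepend' {k : ℕ} {u x w : V} (ha : A u x) (h : ReachWithin A k x w) :
    ReachWithin A (k+1) u w := Or.inr ⟨x, ha, h⟩

lemma rw_append' {k : ℕ} {u y w : V} (h : ReachWithin A k u y) (ha : A y w) :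
    ReachWithin A (k+1) u w := by
  induction k generalizing u with
  | zero => exact h ▸ Or.inr ⟨w, h ▸ ha, rfl⟩
  | succ k ih =>
    rcases h with rfl | ⟨x, hax, hx⟩
    · exact Or.inr ⟨w, ha, rw_refl' _ _⟩
    · exact Or.inr ⟨x, hax, ih hx⟩

lemma rw_parity' {P : V → Prop} (hbip : ∀ u v, A u v → (P u ↔ ¬ P v)) :
    ∀ (k : ℕ) (u w : V), ReachWithin A k u w →
      ∃ j ≤ k, ReachWithin A j u w ∧ ((P u ↔ P w) ↔ Even j) := by
  intro k
  induction k with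
  | zero => intro u w h; exact ⟨0, le_refl _, h, by subst h; simp⟩
  | succ k ih =>
    intro u w h
    rcases h with rfl | ⟨x, hax, hx⟩
    · exact ⟨0, Nat.zero_le _, rfl, by simp⟩
    · obtain ⟨j, hj, hrw, hpar⟩ := ih x w hx
      refine ⟨j+1, by omega, Or.inr ⟨x, hax, hrw⟩, ?_⟩
      rw [Nat.even_add_one]
      have := hbip u x hax
      tauto

lemma rw_pred' : ∀ (k : ℕ) (u x : V), ReachWithin A (k+1) u x → ¬ ReachWithin A k u x →
    ∃ y, ReachWithin A k u y ∧ A y x := by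
  intro k
  induction k with
  | zero =>
    intro u x h hn
    rcases h with rfl | ⟨w, haw, hw⟩
    · exact absurd rfl hn
    · exact ⟨u, rfl, hw ▸ haw⟩
  | succ k ih =>
    intro u x h hn
    rcases h with rfl | ⟨w, haw, hw⟩
    · exact absurd (rw_refl' _ _) hn
    · by_cases hwk : ReachWithin A k w x
      · exact absurd (rw_prepend' haw hwk) hn
      · obtain ⟨y, hy, hyx⟩ := ih w x hw hwk
        exact ⟨y, rw_prepend' haw hy, hyx⟩

end Aux

/-- In a strongly connected bipartite digraph with out-radius `r`, `r ≥ 4` even, every vertex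
`v ∈ V₁` has total degree at most `2|V₂| - (r-2)`. -/
theorem stmt13 [Fintype V] (A : V → V → Prop) (hirr : Irreflexive A)
    (P : V → Prop) (hbip : Bipartition A P)
    (hSC : StronglyConnected A) (r : ℕ) (hr : 4 ≤ r) (hre : Even r)
    (hrad : outRadiusIs A r) :
    ∀ v, P v → totalDeg A v ≤ 2 * {w | ¬ P w}.ncard - (r - 2) := by
  intro v hPv
  classical
  -- distance function
  set d : V → V → ℕ := fun a b => sInf {k | ReachWithin A k a b} with hd_def
  have hd_rw : ∀ a b, ReachWithin A (d a b) a b := fun a b => Nat.sInf_mem (hSC a b)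
  have hd_le : ∀ a b k, ReachWithin A k a b → d a b ≤ k := fun a b k h => Nat.sInf_le h
  -- parity characterization
  have hpx : ∀ x, P x ↔ Even (d v x) := by
    intro x
    obtain ⟨j, hj, hrw, hpar⟩ := rw_parity' hbip (d v x) v x (hd_rw v x)
    have hje : j = d v x := le_antisymm hj (hd_le v x j hrw)
    rw [hje] at hpar
    tauto
  -- eccentricity
  obtain ⟨u₀, -, hmax⟩ := Finset.exists_max_image (Finset.univ : Finset V) (d v)
    ⟨v, Finset.mem_univ v⟩
  set e := d v u₀ with he_def
  have he : ∀ x, d v x ≤ e := fun x => hmax x (Finset.mem_univ x)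
  have her : r ≤ e := by
    obtain ⟨u, hu⟩ := not_forall.mp (hrad.2 v)
    have h1 : r ≤ d v u := by
      by_contra h
      exact hu (rw_mono' (hd_rw v u) (by omega))
    exact le_trans h1 (he u)
  -- predecessors
  have hpred : ∀ x m, d v x = m + 1 → ∃ y, A y x ∧ d v y = m := by
    intro x m hm
    have h1 : ReachWithin A (m+1) v x := hm ▸ hd_rw v x
    have h2 : ¬ ReachWithin A m v x := by
      intro h; have := hd_le v x m h; omega
    obtain ⟨y, hy, hyx⟩ := rw_pred' m v x h1 h2
    refine ⟨y, hyx, le_antisymm (hd_le v y m hy) ?_⟩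
    by_contra h
    push_neg at h
    have h3 : ReachWithin A (d v y + 1) v x := rw_append' (hd_rw v y) hyx
    have := hd_le v x _ h3
    omega
  -- all levels up to e are nonempty
  have hlevaux : ∀ j, j ≤ e → ∃ x, d v x = e - j := by
    intro j
    induction j with
    | zero => exact fun _ => ⟨u₀, by omega⟩
    | succ j ih =>
      intro hj
      obtain ⟨x, hx⟩ := ih (by omega)
      have h1 : e - j = (e - (j+1)) + 1 := by omega
      obtain ⟨y, -, hy⟩ := hpred x _ (by rw [hx, h1])
      exact ⟨y, hy⟩
  have hlev : ∀ i, i ≤ e → ∃ x, d v x = i := by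
    intro i hi
    obtain ⟨x, hx⟩ := hlevaux (e - i) (by omega)
    exact ⟨x, by omega⟩
  set xc : ℕ → V := fun i => if h : ∃ x, d v x = i then h.choose else v with hxc_def
  have hxc : ∀ i, i ≤ e → d v (xc i) = i := by
    intro i hi
    have h := hlev i hi
    simp only [hxc_def, dif_pos h]
    exact h.choose_spec
  -- the key singleton-level lemma
  have h7 : ∀ i, i ≤ r - 1 → e + 1 ≤ r + i →
      (∀ x, d v x = i → x = xc i) → ¬ A (xc i) v := by
    intro i hir hei hsing hA
    have hie : i ≤ e := by omega
    have hfar : ∀ m, ∀ x, d v x = m → i ≤ m → ReachWithin A (m - i) (xc i) x := by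
      intro m
      induction m using Nat.strong_induction_on with
      | _ m ih =>
        intro x hx him
        rcases eq_or_lt_of_le him with heq | hlt
        · have hxz : x = xc i := hsing x (by omega)
          subst hxz
          exact rw_refl' _ _
        · have hm1 : d v x = (m-1) + 1 := by omega
          obtain ⟨y, hyx, hy⟩ := hpred x (m-1) hm1
          have h1 := ih (m-1) (by omega) y hy (by omega)
          have h2 := rw_append' h1 hyx
          have h3 : m - 1 - i + 1 = m - i := by omega
          rwa [h3] at h2
    apply hrad.2 (xc i)
    intro x
    by_cases hcase : i ≤ d v x
    · exact rw_mono' (hfar (d v x) x rfl hcase) (by have := he x; omega)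
    · have h1 : ReachWithin A (d v x + 1) (xc i) x := rw_prepend' hA (hd_rw v x)
      exact rw_mono' h1 (by omega)
  -- combinatorial construction
  obtain ⟨k, hkk⟩ := hre
  set J : Finset ℕ := Finset.Icc 1 (k-1) with hJ_def
  set cb : ℕ → Prop := fun j => 2*k + 2*j + 1 ≤ e with hcb_def
  set two : ℕ → Prop := fun j => ∃ x, d v x = 2*j+1 ∧ x ≠ xc (2*j+1) with htwo_def
  set sc : ℕ → V := fun j => if h : two j then h.choose else v with hsc_def
  have hscspec : ∀ j, two j → d v (sc j) = 2*j+1 ∧ sc j ≠ xc (2*j+1) := by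
    intro j h
    simp only [hsc_def, dif_pos h]
    exact h.choose_spec
  set Jb := J.filter cb with hJb_def
  set Ja := J.filter (fun j => ¬ cb j) with hJa_def
  set Ja2 := Ja.filter two with hJa2_def
  set Ja1 := Ja.filter (fun j => ¬ two j) with hJa1_def
  have hJmem : ∀ j ∈ J, 1 ≤ j ∧ j ≤ k - 1 := fun j hj => Finset.mem_Icc.mp hj
  have hJlev : ∀ j ∈ J, d v (xc (2*j+1)) = 2*j+1 := by
    intro j hj
    have := hJmem j hj
    exact hxc _ (by omega)
  have hJblev : ∀ j ∈ Jb, d v (xc (2*k+2*j+1)) = 2*k+2*j+1 := by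
    intro j hj
    have h2 : cb j := (Finset.mem_filter.mp hj).2
    exact hxc _ h2
  have hJa2spec : ∀ j ∈ Ja2, d v (sc j) = 2*j+1 ∧ sc j ≠ xc (2*j+1) := by
    intro j hj
    exact hscspec j (Finset.mem_filter.mp hj).2
  set X : Finset V :=
    (J.image (fun j => xc (2*j+1)) ∪ Jb.image (fun j => xc (2*k+2*j+1))) ∪ Ja2.image sc
    with hX_def
  set Y : Finset V := Ja1.image (fun j => xc (2*j+1)) with hY_def
  have hJbJ : Jb ⊆ J := Finset.filter_subset _ _
  have hJaJ : Ja ⊆ J := Finset.filter_subset _ _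
  have hJa2J : Ja2 ⊆ J := fun j hj => hJaJ ((Finset.filter_subset _ _) hj)
  have hJa1J : Ja1 ⊆ J := fun j hj => hJaJ ((Finset.filter_subset _ _) hj)
  -- cardinalities
  have hc1 : (J.image (fun j => xc (2*j+1))).card = J.card := by
    apply Finset.card_image_of_injOn
    intro a ha b hb hab
    have h1 := hJlev a (Finset.mem_coe.mp ha)
    have h2 := hJlev b (Finset.mem_coe.mp hb)
    rw [show xc (2*a+1) = xc (2*b+1) from hab] at h1
    omega
  have hc2 : (Jb.image (fun j => xc (2*k+2*j+1))).card = Jb.card := by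
    apply Finset.card_image_of_injOn
    intro a ha b hb hab
    have h1 := hJblev a (Finset.mem_coe.mp ha)
    have h2 := hJblev b (Finset.mem_coe.mp hb)
    rw [show xc (2*k+2*a+1) = xc (2*k+2*b+1) from hab] at h1
    omega
  have hc3 : (Ja2.image sc).card = Ja2.card := by
    apply Finset.card_image_of_injOn
    intro a ha b hb hab
    have h1 := (hJa2spec a (Finset.mem_coe.mp ha)).1
    have h2 := (hJa2spec b (Finset.mem_coe.mp hb)).1
    rw [show sc a = sc b from hab] at h1
    omega
  have hdisj12 : Disjoint (J.image (fun j => xc (2*j+1))) (Jb.image (fun j => xc (2*k+2*j+1))) := by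
    rw [Finset.disjoint_left]
    rintro x hx1 hx2
    obtain ⟨a, ha, rfl⟩ := Finset.mem_image.mp hx1
    obtain ⟨b, hb, hab⟩ := Finset.mem_image.mp hx2
    have h1 := hJlev a ha
    have h2 := hJblev b hb
    have h3 := hJmem a ha
    rw [hab] at h2
    omega
  have hdisj3 : Disjoint (J.image (fun j => xc (2*j+1)) ∪ Jb.image (fun j => xc (2*k+2*j+1)))
      (Ja2.image sc) := by
    rw [Finset.disjoint_left]
    rintro x hx1 hx2
    obtain ⟨c, hc, rfl⟩ := Finset.mem_image.mp hx2
    obtain ⟨h1, h2⟩ := hJa2spec c hc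
    rcases Finset.mem_union.mp hx1 with hx | hx
    · obtain ⟨a, ha, hax⟩ := Finset.mem_image.mp hx
      have h3 := hJlev a ha
      rw [hax] at h3
      have hac : a = c := by omega
      subst hac
      exact h2 hax.symm
    · obtain ⟨b, hb, hbx⟩ := Finset.mem_image.mp hx
      have h3 := hJblev b hb
      rw [hbx] at h3
      have h4 := hJmem c (hJa2J hc)
      omega
  have hXcard : X.card = J.card + Jb.card + Ja2.card := by
    rw [hX_def, Finset.card_union_of_disjoint hdisj3, Finset.card_union_of_disjoint hdisj12,
      hc1, hc2, hc3]
  have hYcard : Y.card = Ja1.card := by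
    rw [hY_def]
    apply Finset.card_image_of_injOn
    intro a ha b hb hab
    have h1 := hJlev a (hJa1J (Finset.mem_coe.mp ha))
    have h2 := hJlev b (hJa1J (Finset.mem_coe.mp hb))
    rw [show xc (2*a+1) = xc (2*b+1) from hab] at h1
    omega
  have hsplit1 : Jb.card + Ja.card = J.card := by
    rw [hJb_def, hJa_def]
    exact Finset.card_filter_add_card_filter_not _
  have hsplit2 : Ja2.card + Ja1.card = Ja.card := by
    rw [hJa2_def, hJa1_def]
    exact Finset.card_filter_add_card_filter_not _
  have hJcard : J.card = k - 1 := by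
    rw [hJ_def, Nat.card_Icc]
    omega
  have hsum : X.card + Y.card = r - 2 := by
    rw [hXcard, hYcard]
    omega
  -- properties of X
  have hXprop : ∀ x ∈ X, Odd (d v x) ∧ 3 ≤ d v x := by
    intro x hx
    rcases Finset.mem_union.mp hx with hx' | hx'
    · rcases Finset.mem_union.mp hx' with hx'' | hx''
      · obtain ⟨j, hj, rfl⟩ := Finset.mem_image.mp hx''
        have h1 := hJlev j hj
        have h2 := hJmem j hj
        exact ⟨⟨j, by omega⟩, by omega⟩
      · obtain ⟨j, hj, rfl⟩ := Finset.mem_image.mp hx''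
        have h1 := hJblev j hj
        exact ⟨⟨k + j, by omega⟩, by omega⟩
    · obtain ⟨j, hj, rfl⟩ := Finset.mem_image.mp hx'
      have h1 := (hJa2spec j hj).1
      have h2 := hJmem j (hJa2J hj)
      exact ⟨⟨j, by omega⟩, by omega⟩
  have hXV2 : ∀ x ∈ X, ¬ P x := by
    intro x hx hPx
    have h1 := (hpx x).mp hPx
    obtain ⟨⟨m, hm⟩, -⟩ := hXprop x hx
    obtain ⟨m', hm'⟩ := h1
    omega
  have hXnotout : ∀ x ∈ X, ¬ A v x := by
    intro x hx hA
    have h1 : d v x ≤ 1 := hd_le v x 1 (Or.inr ⟨x, hA, rfl⟩)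
    have := (hXprop x hx).2
    omega
  -- properties of Y
  have hYprop : ∀ y ∈ Y, ¬ P y ∧ ¬ A y v := by
    intro y hy
    obtain ⟨j, hj, rfl⟩ := Finset.mem_image.mp hy
    have hjJ : j ∈ J := hJa1J hj
    have hjm := hJmem j hjJ
    have hncb : ¬ cb j := (Finset.mem_filter.mp ((Finset.filter_subset _ _) hj : j ∈ Ja)).2
    have hncb' : ¬ cb j := by
      have := Finset.mem_filter.mp hj
      exact (Finset.mem_filter.mp this.1).2
    have hntwo : ¬ two j := (Finset.mem_filter.mp hj).2
    have hlevj := hJlev j hjJ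
    constructor
    · intro hPy
      have h1 := (hpx _).mp hPy
      obtain ⟨m', hm'⟩ := h1
      omega
    · apply h7 (2*j+1) (by omega) ?_ ?_
      · simp only [hcb_def] at hncb'
        omega
      · intro x hx
        by_contra hne
        exact hntwo ⟨x, hx, hne⟩
  -- final counting
  have hout : {w | A v w}.ncard + X.card ≤ {w | ¬ P w}.ncard := by
    have hsub : {w | A v w} ∪ ↑X ⊆ {w | ¬ P w} := by
      intro w hw
      rcases hw with hw | hw
      · exact (hbip v w hw).mp hPv
      · exact hXV2 w (Finset.mem_coe.mp hw)
    have hdisj : Disjoint {w | A v w} (↑X : Set V) := by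
      rw [Set.disjoint_left]
      intro w hw hwX
      exact hXnotout w (Finset.mem_coe.mp hwX) hw
    have h1 : ({w | A v w} ∪ ↑X).ncard = {w | A v w}.ncard + (↑X : Set V).ncard :=
      Set.ncard_union_eq hdisj (Set.toFinite _) (Set.toFinite _)
    have h2 := Set.ncard_le_ncard hsub (Set.toFinite _)
    rw [h1, Set.ncard_coe_finset] at h2
    exact h2
  have hin : {w | A w v}.ncard + Y.card ≤ {w | ¬ P w}.ncard := by
    have hsub : {w | A w v} ∪ ↑Y ⊆ {w | ¬ P w} := by
      intro w hw
      rcases hw with hw | hw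
      · intro hPw
        exact ((hbip w v hw).mp hPw) hPv
      · exact (hYprop w (Finset.mem_coe.mp hw)).1
    have hdisj : Disjoint {w | A w v} (↑Y : Set V) := by
      rw [Set.disjoint_left]
      intro w hw hwY
      exact (hYprop w (Finset.mem_coe.mp hwY)).2 hw
    have h1 : ({w | A w v} ∪ ↑Y).ncard = {w | A w v}.ncard + (↑Y : Set V).ncard :=
      Set.ncard_union_eq hdisj (Set.toFinite _) (Set.toFinite _)
    have h2 := Set.ncard_le_ncard hsub (Set.toFinite _)
    rw [h1, Set.ncard_coe_finset] at h2
    exact h2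
  unfold totalDeg outDeg inDeg
  omega
end
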